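/- For angles φ₁, φ₂ ∈ [-φₘ, φₘ] with 0 < φₘ ≤ π/18, and any angle δ, the quantity A = cos(δ)·cos(φ₁)·cos(φ₂) + sin(φ₁)·sin(φ₂) satisfies A ≥ cos(δ) - (1 + cos(δ))·sin²(φₘ). -/

import Mathlib

/-!
Writing `c = cos δ`, the quantity equals
`((1 + c) cos (φ₁ - φ₂) - (1 - c) cos (φ₁ + φ₂)) / 2`, whose weights `1 ± c` are nonnegative. Bound
`cos (φ₁ + φ₂) ≤ 1`, and, since `|φ₁ - φ₂| ≤ 2 φₘ ≤ π` and `cos` decreases on `[0, π]`,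
`cos (φ₁ - φ₂) ≥ cos (2 φₘ) = 1 - 2 sin² φₘ`.
-/

open Real

lemma cos_mul_cos_mul_cos_add_sin_mul_sin (δ x y : ℝ) :
    cos δ * cos x * cos y + sin x * sin y =
      ((1 + cos δ) * cos (x - y) - (1 - cos δ) * cos (x + y)) / 2 := by
  rw [cos_sub, cos_add]
  ring

lemma cos_le_cos_of_abs_le {x a : ℝ} (hx : |x| ≤ a) (ha : a ≤ π) : cos a ≤ cos x := by
  rw [← cos_abs x]
  exact cos_le_cos_of_nonneg_of_le_pi (abs_nonneg x) ha hx

lemma one_sub_two_mul_sin_sq_le_cos_sub {a x y : ℝ} (ha : a ≤ π / 2)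
    (hx : x ∈ Set.Icc (-a) a) (hy : y ∈ Set.Icc (-a) a) :
    1 - 2 * sin a ^ 2 ≤ cos (x - y) := by
  obtain ⟨hx₁, hx₂⟩ := hx
  obtain ⟨hy₁, hy₂⟩ := hy
  have hxy : |x - y| ≤ 2 * a := abs_le.2 ⟨by linarith, by linarith⟩
  calc 1 - 2 * sin a ^ 2 = cos (2 * a) := (cos_two_mul_eq_one_sub a).symm
    _ ≤ cos (x - y) := cos_le_cos_of_abs_le hxy (by linarith)

theorem cos_mul_cos_mul_cos_add_sin_mul_sin_ge {a x y : ℝ} (δ : ℝ) (ha : a ≤ π / 2)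
    (hx : x ∈ Set.Icc (-a) a) (hy : y ∈ Set.Icc (-a) a) :
    cos δ - (1 + cos δ) * sin a ^ 2 ≤ cos δ * cos x * cos y + sin x * sin y := by
  rw [cos_mul_cos_mul_cos_add_sin_mul_sin]
  have hsub := one_sub_two_mul_sin_sq_le_cos_sub ha hx hy
  have hadd := cos_le_one (x + y)
  have hplus : 0 ≤ 1 + cos δ := by linarith [neg_one_le_cos δ]
  have hminus : 0 ≤ 1 - cos δ := by linarith [cos_le_one δ]
  linarith [mul_le_mul_of_nonneg_left hsub hplus, mul_le_mul_of_nonneg_left hadd hminus]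

theorem length_constraint_lower_bound_general
    (φm φ1 φ2 δ : ℝ) (hφm' : φm ≤ π / 18)
    (h1 : φ1 ∈ Set.Icc (-φm) φm) (h2 : φ2 ∈ Set.Icc (-φm) φm) :
    cos δ * cos φ1 * cos φ2 + sin φ1 * sin φ2 ≥ cos δ - (1 + cos δ) * (sin φm) ^ 2 :=
  cos_mul_cos_mul_cos_add_sin_mul_sin_ge δ (hφm'.trans (by linarith [pi_pos])) h1 h2

theorem length_constraint_lower_bound
    (φm φ1 φ2 δ : ℝ) (hφm : 0 < φm) (hφm' : φm ≤ π / 18)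
    (h1 : φ1 ∈ Set.Icc (-φm) φm) (h2 : φ2 ∈ Set.Icc (-φm) φm) :
    cos δ * cos φ1 * cos φ2 + sin φ1 * sin φ2 ≥ cos δ - (1 + cos δ) * (sin φm) ^ 2 :=
  length_constraint_lower_bound_general φm φ1 φ2 δ hφm' h1 h2
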